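/- For formula graphs G and G', define PropG(G) = {[H]_≅ : H is a formula graph embeddable into G}, where [H]_≅ is the isomorphism class. Then PropG(G) = PropG(G') if and only if G ≅ G'. -/

import Mathlib

/-- A finite signature: finitely many sorts, first-order predicate symbols with
sorted finite arities, second-order relation symbols with finite arities, finitely
many constants per sort, countably infinitely many variables per sort, and no
function symbols. -/
structure Signature where
  Srt : Type
  Pred : Type
  Rel : Type
  sortFinite : Finite Srt
  predFinite : Finite Pred
  relFinite : Finite Rel
  parity : Pred → ℕ
  psort : (p : Pred) → Fin (parity p) → Srt
  rarity : Rel → ℕ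
  Const : Srt → Type
  constFinite : ∀ σ, Finite (Const σ)
  Var : Srt → Type
  varCountable : ∀ σ, Countable (Var σ)
  varInfinite : ∀ σ, Infinite (Var σ)

namespace Signature

/-- First-order terms of sort `σ`: constants and variables. -/
def Term (S : Signature) (σ : S.Srt) : Type := S.Const σ ⊕ S.Var σ

/-- A first-order literal: a predicate symbol, a polarity, and sorted arguments. -/
structure Literal (S : Signature) where
  pred : S.Pred
  pol : Bool
  args : (i : Fin (S.parity pred)) → S.Term (S.psort pred i)

/-- A formula graph: a finite set `V` of literals together with, for each
second-order relation symbol `R`, a set of tuples from `V` of length the arity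
of `R`. -/
structure FormulaGraph (S : Signature) where
  V : Set (Literal S)
  Vfin : V.Finite
  E : (R : S.Rel) → Set (Fin (S.rarity R) → Literal S)
  E_mem : ∀ R t, t ∈ E R → ∀ i, t i ∈ V

/-- The order of a formula graph: the number of its vertices. -/
noncomputable def FormulaGraph.order {S : Signature} (G : FormulaGraph S) : ℕ := G.V.ncard

/-- Applying a sort-indexed substitution to a literal. -/
def Literal.map {S : Signature} (α : ∀ σ, S.Term σ → S.Term σ) (l : Literal S) :
    Literal S :=
  ⟨l.pred, l.pol, fun i => α _ (l.args i)⟩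

/-- A homomorphism of formula graphs: a vertex map together with sort-indexed
substitutions fixing constants, compatible with the literal structure, and
preserving edges. -/
structure Hom {S : Signature} (G G' : FormulaGraph S) where
  h : Literal S → Literal S
  α : ∀ σ, S.Term σ → S.Term σ
  fixesConst : ∀ σ (c : S.Const σ), α σ (Sum.inl c) = Sum.inl c
  mapsV : ∀ l ∈ G.V, h l ∈ G'.V
  compat : ∀ l ∈ G.V, h l = Literal.map α l
  mapsE : ∀ R t, t ∈ G.E R → (fun i => h (t i)) ∈ G'.E R

/-- The identity homomorphism. -/
def Hom.id {S : Signature} (G : FormulaGraph S) : Hom G G where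
  h := fun l => l
  α := fun _ t => t
  fixesConst := fun _ _ => rfl
  mapsV := fun _ hl => hl
  compat := fun _ _ => rfl
  mapsE := fun _ _ ht => ht

/-- Composition of homomorphisms, componentwise. -/
def Hom.comp {S : Signature} {G G' G'' : FormulaGraph S}
    (f : Hom G G') (g : Hom G' G'') : Hom G G'' where
  h := fun l => g.h (f.h l)
  α := fun σ t => g.α σ (f.α σ t)
  fixesConst := fun σ c => (congrArg (g.α σ) (f.fixesConst σ c)).trans (g.fixesConst σ c)
  mapsV := fun l hl => g.mapsV _ (f.mapsV l hl)
  compat := by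
    intro l hl
    show g.h (f.h l) = Literal.map (fun σ t => g.α σ (f.α σ t)) l
    rw [g.compat _ (f.mapsV l hl), f.compat l hl]
    rfl
  mapsE := fun R t ht => g.mapsE R _ (f.mapsE R t ht)

/-- An embedding: a homomorphism injective on vertices with injective
substitutions. -/
def IsEmbedding {S : Signature} {G G' : FormulaGraph S} (f : Hom G G') : Prop :=
  Set.InjOn f.h G.V ∧ ∀ σ, Function.Injective (f.α σ)

/-- An isomorphism: a homomorphism with bijective components whose componentwise
inverses also form a homomorphism. -/
def IsIso {S : Signature} {G G' : FormulaGraph S} (f : Hom G G') : Prop :=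
  Set.BijOn f.h G.V G'.V ∧ (∀ σ, Function.Bijective (f.α σ)) ∧
  ∃ g : Hom G' G,
    (∀ l ∈ G.V, g.h (f.h l) = l) ∧ (∀ l ∈ G'.V, f.h (g.h l) = l) ∧
    (∀ σ t, g.α σ (f.α σ t) = t) ∧ (∀ σ t, f.α σ (g.α σ t) = t)

/-- Two formula graphs are isomorphic if there is an isomorphism between them. -/
def Iso {S : Signature} (G G' : FormulaGraph S) : Prop := ∃ f : Hom G G', IsIso f

/-- `G` can be embedded into `G'`. -/
def CanEmbed {S : Signature} (G G' : FormulaGraph S) : Prop :=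
  ∃ f : Hom G G', IsEmbedding f

end Signature

/-!
If `G` and `G'` embed into each other, the vertex maps compose to an injective self-map of the
finite set `G'.V`, hence a bijection, so the embedding `f : G → G'` is bijective on vertices;
the same argument applies to each (finite) edge set. The substitutions of `f` are injective but
need not be surjective. Only their values on the finitely many terms occurring in `G` (and on the
finitely many constants) matter, and every sort has infinitely many variables, so they can be
replaced by permutations. Inverting these permutations then inverts `f`.
-/

theorem Set.Finite.surjOn_of_injOn_comp {α β : Type*} {s : Set α} {t : Set β} {f : α → β}
    {g : β → α} (ht : t.Finite) (hf : Set.MapsTo f s t) (hg : Set.MapsTo g t s)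
    (hfg : Set.InjOn (f ∘ g) t) : Set.SurjOn f s t :=
  ((ht.injOn_iff_bijOn_of_mapsTo (hf.comp hg)).mp hfg).surjOn.of_comp hg

theorem Equiv.Perm.exists_eqOn_of_injOn {X : Type*} [Infinite X] {s : Set X} (hs : s.Finite)
    {φ : X → X} (hφ : Set.InjOn φ s) : ∃ π : Equiv.Perm X, Set.EqOn π φ s := by
  obtain ⟨π, hπ⟩ := Cardinal.extend_function_of_lt ⟨s.domRestrict φ, hφ.injective⟩
    (hs.lt_aleph0.trans_le (Cardinal.aleph0_le_mk X)) ⟨Equiv.refl X⟩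
  exact ⟨π, fun x hx => hπ ⟨x, hx⟩⟩

namespace Signature

variable {S : Signature}

instance Term.infinite (σ : S.Srt) : Infinite (S.Term σ) :=
  have := S.varInfinite σ
  Sum.infinite_of_right

theorem Term.finite_range_inl (σ : S.Srt) :
    (Set.range (Sum.inl : S.Const σ → S.Term σ)).Finite :=
  have := S.constFinite σ
  Set.finite_range _

theorem Literal.map_congr {α β : ∀ σ, S.Term σ → S.Term σ} (l : Literal S)
    (h : ∀ i, α _ (l.args i) = β _ (l.args i)) : l.map α = l.map β := by
  simp only [Literal.map, h]

theorem Literal.map_map_of_leftInverse {α β : ∀ σ, S.Term σ → S.Term σ}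
    (h : ∀ σ, Function.LeftInverse (β σ) (α σ)) (l : Literal S) : (l.map α).map β = l := by
  cases l
  exact congrArg _ (funext fun i => h _ _)

namespace FormulaGraph

def terms (G : FormulaGraph S) (σ : S.Srt) : Set (S.Term σ) :=
  {x | ∃ l ∈ G.V, ∃ i : Fin (S.parity l.pred), ∃ h : S.psort l.pred i = σ, h ▸ l.args i = x}

theorem args_mem_terms {G : FormulaGraph S} {l : Literal S} (hl : l ∈ G.V)
    (i : Fin (S.parity l.pred)) : l.args i ∈ G.terms (S.psort l.pred i) :=
  ⟨l, hl, i, rfl, rfl⟩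

theorem terms_finite (G : FormulaGraph S) (σ : S.Srt) : (G.terms σ).Finite := by
  refine (G.Vfin.biUnion fun l _ => Set.finite_range
    fun i : {i : Fin (S.parity l.pred) // S.psort l.pred i = σ} => i.2 ▸ l.args i.1).subset ?_
  rintro x ⟨l, hl, i, h, rfl⟩
  exact Set.mem_biUnion hl ⟨⟨i, h⟩, rfl⟩

theorem edges_finite (G : FormulaGraph S) (R : S.Rel) : (G.E R).Finite :=
  (Set.Finite.pi fun _ => G.Vfin).subset fun t ht i _ => G.E_mem R t ht i

end FormulaGraph

variable {G G' G'' : FormulaGraph S}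

theorem IsEmbedding.comp {f : Hom G G'} {g : Hom G' G''} (hf : IsEmbedding f)
    (hg : IsEmbedding g) : IsEmbedding (f.comp g) :=
  ⟨hg.1.comp hf.1 f.mapsV, fun σ => (hg.2 σ).comp (hf.2 σ)⟩

theorem IsEmbedding.injOn_edges {f : Hom G G'} (hf : IsEmbedding f) (R : S.Rel) :
    Set.InjOn (fun t i => f.h (t i)) (G.E R) := fun t ht u hu htu =>
  funext fun i => hf.1 (G.E_mem R t ht i) (G.E_mem R u hu i) (congrFun htu i)

theorem IsEmbedding.bijOn_of_canEmbed {f : Hom G G'} (hf : IsEmbedding f)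
    (h : CanEmbed G' G) : Set.BijOn f.h G.V G'.V := by
  obtain ⟨g, hg⟩ := h
  exact ⟨f.mapsV, hf.1,
    G'.Vfin.surjOn_of_injOn_comp f.mapsV g.mapsV (hf.1.comp hg.1 g.mapsV)⟩

theorem IsEmbedding.surjOn_edges_of_canEmbed {f : Hom G G'} (hf : IsEmbedding f)
    (h : CanEmbed G' G) (R : S.Rel) :
    Set.SurjOn (fun t i => f.h (t i)) (G.E R) (G'.E R) := by
  obtain ⟨g, hg⟩ := h
  exact (G'.edges_finite R).surjOn_of_injOn_comp (f.mapsE R) (g.mapsE R)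
    ((hf.injOn_edges R).comp (hg.injOn_edges R) (g.mapsE R))

theorem IsEmbedding.exists_bijective_subst {f : Hom G G'} (hf : IsEmbedding f) :
    ∃ f' : Hom G G', f'.h = f.h ∧ ∀ σ, Function.Bijective (f'.α σ) := by
  choose π hπ using fun σ => Equiv.Perm.exists_eqOn_of_injOn
    ((G.terms_finite σ).union (Term.finite_range_inl σ)) (hf.2 σ).injOn
  refine ⟨{ h := f.h
            α := fun σ => π σ
            fixesConst := fun σ c => (hπ σ (Or.inr ⟨c, rfl⟩)).trans (f.fixesConst σ c)
            mapsV := f.mapsV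
            compat := fun l hl => (f.compat l hl).trans <| Literal.map_congr l fun i =>
              (hπ _ (Or.inl (G.args_mem_terms hl i))).symm
            mapsE := f.mapsE }, rfl, fun σ => (π σ).bijective⟩

theorem isIso_of_bijective {f : Hom G G'} (hV : Set.BijOn f.h G.V G'.V)
    (hE : ∀ R, Set.SurjOn (fun t i => f.h (t i)) (G.E R) (G'.E R))
    (hα : ∀ σ, Function.Bijective (f.α σ)) : IsIso f := by
  let e σ := Equiv.ofBijective _ (hα σ)
  have hinv : ∀ l ∈ G.V, (f.h l).map (fun σ => (e σ).symm) = l := fun l hl => by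
    rw [f.compat l hl]
    exact Literal.map_map_of_leftInverse (fun σ => (e σ).symm_apply_apply) l
  refine ⟨hV, hα, { h := Literal.map fun σ => (e σ).symm
                    α := fun σ => (e σ).symm
                    fixesConst := fun σ c => (e σ).symm_apply_eq.mpr (f.fixesConst σ c).symm
                    mapsV := ?_
                    compat := fun _ _ => rfl
                    mapsE := ?_ }, hinv, ?_,
    fun σ => (e σ).symm_apply_apply, fun σ => (e σ).apply_symm_apply⟩
  · intro l' hl'
    obtain ⟨l, hl, rfl⟩ := hV.surjOn hl'
    simpa only [hinv l hl] using hl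
  · intro R t ht
    obtain ⟨u, hu, rfl⟩ := hE R ht
    convert hu using 1
    exact funext fun i => hinv _ (G.E_mem R u hu i)
  · intro l' hl'
    obtain ⟨l, hl, rfl⟩ := hV.surjOn hl'
    exact congrArg f.h (hinv l hl)

theorem Iso.refl (G : FormulaGraph S) : Iso G G :=
  ⟨Hom.id G, Set.bijOn_id G.V, fun _ => Function.bijective_id,
    Hom.id G, fun _ _ => rfl, fun _ _ => rfl, fun _ _ => rfl, fun _ _ => rfl⟩

theorem Iso.symm (h : Iso G G') : Iso G' G := by
  obtain ⟨f, hV, -, g, hgf, hfg, hαgf, hαfg⟩ := h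
  exact ⟨g, hV.symm ⟨hfg, hgf⟩,
    fun σ => ⟨Function.LeftInverse.injective (hαfg σ), Function.LeftInverse.surjective (hαgf σ)⟩,
    f, hfg, hgf, hαfg, hαgf⟩

theorem Iso.canEmbed (h : Iso G G') : CanEmbed G G' :=
  h.imp fun _ hf => ⟨hf.1.injOn, fun σ => (hf.2.1 σ).injective⟩

theorem CanEmbed.trans (h : CanEmbed G G') (h' : CanEmbed G' G'') : CanEmbed G G'' :=
  let ⟨f, hf⟩ := h
  let ⟨g, hg⟩ := h'
  ⟨f.comp g, hf.comp hg⟩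

theorem CanEmbed.antisymm (h : CanEmbed G G') (h' : CanEmbed G' G) : Iso G G' := by
  obtain ⟨f, hf⟩ := h
  obtain ⟨f', hf'h, hf'α⟩ := hf.exists_bijective_subst
  refine ⟨f', isIso_of_bijective ?_ (fun R => ?_) hf'α⟩ <;> rw [hf'h]
  exacts [hf.bijOn_of_canEmbed h', hf.surjOn_edges_of_canEmbed h' R]

end Signature

open Signature in
/-- the sets of isomorphism classes of formula graphs embeddable into
`G` and into `G'` coincide iff `G` and `G'` are isomorphic. -/
theorem stmt11 (S : Signature) (G G' : FormulaGraph S) :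
    (∀ H : FormulaGraph S,
        (∃ H', Iso H H' ∧ CanEmbed H' G) ↔ (∃ H', Iso H H' ∧ CanEmbed H' G')) ↔
      Iso G G' := by
  constructor
  · intro h
    obtain ⟨H, hGH, hHG'⟩ := (h G).mp ⟨G, Iso.refl G, (Iso.refl G).canEmbed⟩
    obtain ⟨H', hG'H', hH'G⟩ := (h G').mpr ⟨G', Iso.refl G', (Iso.refl G').canEmbed⟩
    exact (hGH.canEmbed.trans hHG').antisymm (hG'H'.canEmbed.trans hH'G)
  · intro e H
    exact ⟨fun ⟨H', hH, hH'G⟩ => ⟨H', hH, hH'G.trans e.canEmbed⟩,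
      fun ⟨H', hH, hH'G'⟩ => ⟨H', hH, hH'G'.trans e.symm.canEmbed⟩⟩
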